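/- Let p ≥ 5 be a prime, m = ⌊p/8⌋, d = m + ε + ν, and write ss_p^{(2*)}(Y) = Σ_{k=0}^{d} a_k Y^k with a_k ∈ 𝔽_p. Then Σ_{k=0}^{d} a_k · X^{2k} · (X − 64)^{d−k} = X^ε · (X − 128)^ν · ss_p^{(2)}(X) in 𝔽_p[X]; that is, (X − 64)^{m+ε+ν} · ss_p^{(2*)}(X²/(X−64)) = X^ε (X − 128)^ν ss_p^{(2)}(X) mod p. -/

import Mathlib

open Polynomial

noncomputable section

/-- The class number h(√-d) of the imaginary quadratic field ℚ(√-d),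
realized as the subfield of ℂ generated by i·√d. -/
def classNumberSqrtNeg (d : ℕ) : ℕ :=
  haveI : FiniteDimensional ℚ (IntermediateField.adjoin ℚ {(Complex.I * Real.sqrt d : ℂ)}) :=
    IntermediateField.adjoin.finiteDimensional
      ⟨X ^ 2 + C (d : ℚ), monic_X_pow_add_C _ (by norm_num), by
        have h : (Complex.I * (Real.sqrt d : ℂ)) ^ 2 = -(d : ℂ) := by
          rw [mul_pow, Complex.I_sq, ← Complex.ofReal_pow, Real.sq_sqrt (Nat.cast_nonneg d)]
          simp
        simp [h]⟩
  haveI : NumberField (IntermediateField.adjoin ℚ {(Complex.I * Real.sqrt d : ℂ)}) := ⟨⟩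
  NumberField.classNumber (IntermediateField.adjoin ℚ {(Complex.I * Real.sqrt d : ℂ)})

variable (p : ℕ) [Fact p.Prime]

/-- ε = (1 - (-1|p))/2 -/
def eps : ℕ := ((1 - legendreSym p (-1)) / 2).toNat
/-- δ = (1 - (-3|p))/2 -/
def del : ℕ := ((1 - legendreSym p (-3)) / 2).toNat
/-- ν = (1 - (-2|p))/2 -/
def nu : ℕ := ((1 - legendreSym p (-2)) / 2).toNat

/-- The Pochhammer symbol (x)_n = x(x+1)⋯(x+n-1) in 𝔽_p. -/
def poch (x : ZMod p) (n : ℕ) : ZMod p := (ascPochhammer (ZMod p) n).eval x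

/-- The level-2 Fricke supersingular polynomial ss_p^{(2*)}(X) ∈ 𝔽_p[X]:
(X-256)^ν · Σ_{n=0}^{m₂} ((-m₂)_n (β₂)_n / (n!)²) 256^n X^{m₂+ε-n},
with m₂ = ⌊p/8⌋ and β₂ = 3/8 - (ε-2ν)/4. -/
def ss2Star : (ZMod p)[X] :=
  (X - C 256) ^ nu p *
    ∑ n ∈ Finset.range (p / 8 + 1),
      C (poch p (-(p / 8 : ℕ) : ZMod p) n *
         poch p ((3 : ZMod p) / 8 - ((((eps p : ℤ) - 2 * (nu p : ℤ)) : ℤ) : ZMod p) / 4) n /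
         ((n.factorial : ZMod p)) ^ 2 * 256 ^ n) *
      X ^ (p / 8 + eps p - n)

/-- L^{(2*)}(p): the number of distinct roots of ss_p^{(2*)}(X) in 𝔽_p. -/
def L2Star : ℕ := (ss2Star p).roots.toFinset.card

/-- The level-2 supersingular polynomial ss_p^{(2)}(X) ∈ 𝔽_p[X]:
Σ_{n=0}^{m} ((-m)_n (3/4-ε/2)_n / (n!)²) 64^n X^{m+ε-n}, with m = ⌊p/4⌋. -/
def ss2Poly : (ZMod p)[X] :=
  ∑ n ∈ Finset.range (p / 4 + 1),
    C (poch p (-(p / 4 : ℕ) : ZMod p) n *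
       poch p ((3 : ZMod p) / 4 - (eps p : ZMod p) / 2) n /
       ((n.factorial : ZMod p)) ^ 2 * 64 ^ n) *
    X ^ (p / 4 + eps p - n)

/-- L^{(2)}(p): the number of distinct roots of ss_p^{(2)}(X) in 𝔽_p. -/
def L2 : ℕ := (ss2Poly p).roots.toFinset.card



lemma poch_succ_left {F : Type*} [Field F] (x : F) (n : ℕ) :
    (ascPochhammer F (n+1)).eval x = x * (ascPochhammer F n).eval (x+1) := by
  rw [ascPochhammer_succ_left]; simp [eval_comp]

lemma poch_shift {F : Type*} [Field F] (x : F) (n : ℕ) :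
    (ascPochhammer F n).eval (x+1) * x = (ascPochhammer F n).eval x * (x + n) := by
  induction n with
  | zero => simp
  | succ n ih =>
    rw [ascPochhammer_succ_eval, ascPochhammer_succ_eval]
    push_cast
    linear_combination (x + 1 + n) * ih



def gcoef (ν m n : ℕ) : ZMod p :=
  (ascPochhammer (ZMod p) n).eval (-(m : ZMod p)) *
    (ascPochhammer (ZMod p) n).eval ((m : ZMod p) + (ν : ZMod p) + 2⁻¹) * (-4)^n /
      ((n.factorial : ZMod p))^2

lemma R1 (m n : ℕ) (h2 : (2 : ZMod p) ≠ 0) (hm : ((m : ZMod p) + 1) ≠ 0)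
    (hb : (2*(m : ZMod p) + 3) ≠ 0) (hf : ((n.factorial : ℕ) : ZMod p) ≠ 0) :
    (2*(m:ZMod p)+3) * gcoef p 1 (m+1) n
      = (4*(m:ZMod p)+5) * gcoef p 0 (m+1) n - (2*(m:ZMod p)+2) * gcoef p 1 m n := by
  unfold gcoef
  have e1 : (((m+1:ℕ) : ZMod p)) = (m : ZMod p) + 1 := by push_cast; ring
  rw [e1]
  simp only [Nat.cast_one, Nat.cast_zero, add_zero]
  set a := (m : ZMod p) with ha
  rw [show a + 1 + 1 + 2⁻¹ = (a + 1 + 2⁻¹) + 1 by ring]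
  have hA := poch_shift (-(a+1)) n
  rw [show -(a+1) + 1 = -a by ring] at hA
  have hQ := poch_shift (a + 1 + 2⁻¹) n
  have h2c : 2*(a+1+2⁻¹) = 2*a+3 := by
    field_simp
    ring
  have hA2 : (ascPochhammer (ZMod p) n).eval (-a)
      = (ascPochhammer (ZMod p) n).eval (-(a+1)) * ((a+1) - n) / (a+1) := by
    rw [eq_div_iff hm]
    linear_combination -hA
  have hQ2 : (ascPochhammer (ZMod p) n).eval ((a + 1 + 2⁻¹) + 1)
      = (ascPochhammer (ZMod p) n).eval (a + 1 + 2⁻¹) * (2*a+3+2*n) / (2*a+3) := by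
    rw [eq_div_iff hb]
    have h1 : (2:ZMod p)*2⁻¹ = 1 := mul_inv_cancel₀ h2
    linear_combination 2*hQ + ((ascPochhammer (ZMod p) n).eval (a + 1 + 2⁻¹ + 1)
      - (ascPochhammer (ZMod p) n).eval (a + 1 + 2⁻¹))*h2c
      - 2*((ascPochhammer (ZMod p) n).eval (a + 1 + 2⁻¹ + 1)
      - (ascPochhammer (ZMod p) n).eval (a + 1 + 2⁻¹))*h1
  rw [hA2, hQ2]
  field_simp
  ring

lemma R2 (m n : ℕ) (h2 : (2 : ZMod p) ≠ 0) (hn1 : ((n : ZMod p) + 1) ≠ 0)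
    (hf : ((n.factorial : ℕ) : ZMod p) ≠ 0) :
    (2*(m:ZMod p)+2) * gcoef p 0 (m+1) (n+1)
      = (4*(m:ZMod p)+3) * (gcoef p 1 m (n+1) + 4 * gcoef p 1 m n)
        - (2*(m:ZMod p)+1) * gcoef p 0 m (n+1) := by
  unfold gcoef
  have e1 : (((m+1:ℕ) : ZMod p)) = (m : ZMod p) + 1 := by push_cast; ring
  rw [e1]
  simp only [Nat.cast_one, Nat.cast_zero, add_zero]
  set a := (m : ZMod p) with ha
  have h1 : (2:ZMod p)*2⁻¹ = 1 := mul_inv_cancel₀ h2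
  have hv : (((n+1).factorial : ℕ) : ZMod p) ≠ 0 := by
    rw [Nat.factorial_succ]
    push_cast
    exact mul_ne_zero hn1 hf
  have hL1 : (ascPochhammer (ZMod p) (n+1)).eval (-(a+1))
      = -(a+1) * (ascPochhammer (ZMod p) n).eval (-a) := by
    rw [poch_succ_left, show -(a+1)+1 = -a by ring]
  have hL2 : (ascPochhammer (ZMod p) (n+1)).eval (a+1+2⁻¹)
      = (ascPochhammer (ZMod p) n).eval (a+1+2⁻¹) * (2*a+3+2*n) / 2 := by
    rw [eq_div_iff h2, ascPochhammer_succ_eval]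
    linear_combination (ascPochhammer (ZMod p) n).eval (a+1+2⁻¹) * h1
  have hL3 : (ascPochhammer (ZMod p) (n+1)).eval (-a)
      = (ascPochhammer (ZMod p) n).eval (-a) * (-a + n) := ascPochhammer_succ_eval n (-a)
  have hL4 : (ascPochhammer (ZMod p) (n+1)).eval (a+2⁻¹)
      = (2*a+1) * (ascPochhammer (ZMod p) n).eval (a+1+2⁻¹) / 2 := by
    rw [eq_div_iff h2, poch_succ_left, show a+2⁻¹+1 = a+1+2⁻¹ by ring]
    linear_combination (ascPochhammer (ZMod p) n).eval (a+1+2⁻¹) * h1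
  have hg3 : (ascPochhammer (ZMod p) n).eval (-a) * (ascPochhammer (ZMod p) n).eval (a+1+2⁻¹)
        * (-4)^n / ((n.factorial : ℕ) : ZMod p)^2
      = 2 * ((n:ZMod p)+1)^2 * (ascPochhammer (ZMod p) n).eval (-a)
        * (ascPochhammer (ZMod p) n).eval (a+1+2⁻¹) * (-4)^n
          / (2 * (((n+1).factorial : ℕ) : ZMod p)^2) := by
    rw [div_eq_div_iff (pow_ne_zero 2 hf) (mul_ne_zero h2 (pow_ne_zero 2 hv)), Nat.factorial_succ]
    push_cast
    ring
  rw [hL1, hL2, hL3, hL4, hg3]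
  ring


def bcoef (N s : ℕ) : ZMod p :=
  (-1)^s * (ascPochhammer (ZMod p) s).eval (-(N : ZMod p)) *
    (ascPochhammer (ZMod p) s).eval ((N : ZMod p) + 1) / ((s.factorial : ℕ) : ZMod p)^2

lemma Bscalar (M t : ℕ) (ht1 : ((t : ZMod p) + 1) ≠ 0)
    (hft : ((t.factorial : ℕ) : ZMod p) ≠ 0) :
    ((M:ZMod p)+2) * bcoef p (M+2) (t+1)
      = (2*(M:ZMod p)+3) * (bcoef p (M+1) (t+1) + 2 * bcoef p (M+1) t)
        - ((M:ZMod p)+1) * bcoef p M (t+1) := by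
  unfold bcoef
  rw [show ((M+2:ℕ) : ZMod p) = (M:ZMod p)+2 by push_cast; ring,
      show ((M+1:ℕ) : ZMod p) = (M:ZMod p)+1 by push_cast; ring]
  set c := (M : ZMod p) with hc
  rw [show c+2+1 = c+3 by ring, show c+1+1 = c+2 by ring]
  have hv : (((t+1).factorial : ℕ) : ZMod p) ≠ 0 := by
    rw [Nat.factorial_succ]; push_cast; exact mul_ne_zero ht1 hft
  have hB1 : (ascPochhammer (ZMod p) (t+1)).eval (-(c+2))
      = -(c+2) * (ascPochhammer (ZMod p) t).eval (-(c+1)) := by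
    rw [poch_succ_left, show -(c+2)+1 = -(c+1) by ring]
  have hB2 : (ascPochhammer (ZMod p) (t+1)).eval (c+3)
      = (ascPochhammer (ZMod p) t).eval (c+3) * (c+3+t) := ascPochhammer_succ_eval t _
  have hB3 : (ascPochhammer (ZMod p) (t+1)).eval (-(c+1))
      = (ascPochhammer (ZMod p) t).eval (-(c+1)) * (-(c+1)+t) := ascPochhammer_succ_eval t _
  have hB4 : (ascPochhammer (ZMod p) (t+1)).eval (c+2)
      = (c+2) * (ascPochhammer (ZMod p) t).eval (c+3) := by
    rw [poch_succ_left, show c+2+1 = c+3 by ring]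
  have hB5 : (ascPochhammer (ZMod p) (t+1)).eval (-c)
      = (ascPochhammer (ZMod p) t).eval (-c) * (-c+t) := ascPochhammer_succ_eval t _
  have hB6 : (ascPochhammer (ZMod p) (t+1)).eval (c+1)
      = (c+1) * (ascPochhammer (ZMod p) t).eval (c+2) := by
    rw [poch_succ_left, show c+1+1 = c+2 by ring]
  have hR := poch_shift (c+2) t
  rw [show c+2+1 = c+3 by ring] at hR
  have hS := poch_shift (-(c+1)) t
  rw [show -(c+1)+1 = -c by ring] at hS
  have hcv : (-1)^t * (ascPochhammer (ZMod p) t).eval (-(c+1))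
        * (ascPochhammer (ZMod p) t).eval (c+2) / ((t.factorial : ℕ) : ZMod p)^2
      = ((t:ZMod p)+1)^2 * ((-1)^t * (ascPochhammer (ZMod p) t).eval (-(c+1))
        * (ascPochhammer (ZMod p) t).eval (c+2)) / (((t+1).factorial : ℕ) : ZMod p)^2 := by
    rw [div_eq_div_iff (pow_ne_zero 2 hft) (pow_ne_zero 2 hv), Nat.factorial_succ]
    push_cast
    ring
  rw [hB1, hB2, hB3, hB4, hB5, hB6, hcv]
  linear_combination ((-1)^t * (ascPochhammer (ZMod p) t).eval (-(c+1))
      * ((c+2)*(c+3+(t:ZMod p)) + (2*c+3)*((t:ZMod p)-c-1))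
        / (((t+1).factorial : ℕ) : ZMod p)^2) * hR
    + ((-1)^t * (c+1) * (ascPochhammer (ZMod p) t).eval (c+2) * ((t:ZMod p)-c)
        / (((t+1).factorial : ℕ) : ZMod p)^2) * hS

lemma poch_neg_nat {F : Type*} [Field F] (N s : ℕ) :
    (ascPochhammer F s).eval (-(N : F)) = (-1)^s * (N.descFactorial s : F) := by
  induction s with
  | zero => simp
  | succ s ih =>
    rw [ascPochhammer_succ_eval, ih, Nat.descFactorial_succ]
    rcases le_or_gt s N with h | h
    · push_cast [Nat.cast_sub h]
      ring
    · rw [Nat.descFactorial_eq_zero_iff_lt.mpr h]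
      push_cast
      ring

lemma poch_neg_eq_zero {F : Type*} [Field F] {N s : ℕ} (h : N < s) :
    (ascPochhammer F s).eval (-(N : F)) = 0 := by
  rw [poch_neg_nat, Nat.descFactorial_eq_zero_iff_lt.mpr h]
  simp

lemma gcoef_zero (ν m : ℕ) : gcoef p ν m 0 = 1 := by simp [gcoef]

lemma bcoef_zero (N : ℕ) : bcoef p N 0 = 1 := by simp [bcoef]

lemma gcoef_vanish (ν m n : ℕ) (h : m < n) : gcoef p ν m n = 0 := by
  simp [gcoef, poch_neg_eq_zero h]

lemma bcoef_vanish (N s : ℕ) (h : N < s) : bcoef p N s = 0 := by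
  simp [bcoef, poch_neg_eq_zero h]

lemma natCast_ne_zero_of_lt (k : ℕ) (h0 : 0 < k) (h : k < p) : (k : ZMod p) ≠ 0 := by
  rw [Ne, ZMod.natCast_eq_zero_iff]
  intro hd
  exact absurd (Nat.le_of_dvd h0 hd) (not_le.2 h)

lemma factCast_ne_zero (k : ℕ) (h : k < p) : ((k.factorial : ℕ) : ZMod p) ≠ 0 := by
  rw [Ne, ZMod.natCast_eq_zero_iff]
  intro hd
  have := (Nat.Prime.dvd_factorial (Fact.out)).mp hd
  omega

def Bpoly (N : ℕ) : (ZMod p)[X] := ∑ s ∈ Finset.range (N+1), C (bcoef p N s) * X^s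

def Apoly (ν m : ℕ) : (ZMod p)[X] :=
  (1+2*X)^ν * ∑ n ∈ Finset.range (m+1), C (gcoef p ν m n) * (X*(1+X))^n

lemma coeff_sumCX (f : ℕ → ZMod p) (d k : ℕ) :
    (∑ s ∈ Finset.range d, C (f s) * X^s).coeff k = if k < d then f k else 0 := by
  rw [finset_sum_coeff]
  simp only [coeff_C_mul, coeff_X_pow, mul_ite, mul_one, mul_zero]
  rw [Finset.sum_ite_eq (Finset.range d) k f]
  simp [Finset.mem_range]

lemma Bpoly_coeff (N k : ℕ) : (Bpoly p N).coeff k = bcoef p N k := by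
  rw [Bpoly, coeff_sumCX]
  split_ifs with h
  · rfl
  · exact (bcoef_vanish p N k (by omega)).symm

lemma Brec (M : ℕ) (hp5 : 5 ≤ p) (hbd : 2*M+4 ≤ p) :
    C ((M:ZMod p)+2) * Bpoly p (M+2)
      = C (2*(M:ZMod p)+3) * ((1+2*X) * Bpoly p (M+1)) - C ((M:ZMod p)+1) * Bpoly p M := by
  have expand : (1+2*X) * Bpoly p (M+1) = Bpoly p (M+1) + C 2 * (X * Bpoly p (M+1)) := by
    rw [map_ofNat]
    ring
  rw [expand]
  ext k
  simp only [coeff_C_mul, coeff_sub, coeff_add, Bpoly_coeff]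
  match k with
  | 0 =>
    rw [Polynomial.mul_coeff_zero]
    simp only [coeff_X_zero, zero_mul, mul_zero, add_zero, bcoef_zero]
    ring
  | t+1 =>
    rw [Polynomial.coeff_X_mul, Bpoly_coeff]
    rcases le_or_gt t (M+1) with h | h
    · have ht1 : ((t : ZMod p) + 1) ≠ 0 := by
        have : ((t+1 : ℕ) : ZMod p) ≠ 0 := natCast_ne_zero_of_lt p (t+1) (by omega) (by omega)
        push_cast at this
        exact this
      have hft : ((t.factorial : ℕ) : ZMod p) ≠ 0 := factCast_ne_zero p t (by omega)
      exact Bscalar p M t ht1 hft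
    · rw [bcoef_vanish p (M+2) (t+1) (by omega), bcoef_vanish p (M+1) (t+1) (by omega),
        bcoef_vanish p (M+1) t (by omega), bcoef_vanish p M (t+1) (by omega)]
      ring

lemma Arec0 (m : ℕ) (hp5 : 5 ≤ p) (hbd : 2*m+4 ≤ p) :
    C (2*(m:ZMod p)+3) * Apoly p 1 (m+1)
      = C (4*(m:ZMod p)+5) * ((1+2*X) * Apoly p 0 (m+1)) - C (2*(m:ZMod p)+2) * Apoly p 1 m := by
  have h2 : (2 : ZMod p) ≠ 0 := by
    have := natCast_ne_zero_of_lt p 2 (by omega) (by omega)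
    exact_mod_cast this
  have hm : ((m : ZMod p) + 1) ≠ 0 := by
    have := natCast_ne_zero_of_lt p (m+1) (by omega) (by omega)
    push_cast at this
    exact this
  have hb : (2*(m : ZMod p) + 3) ≠ 0 := by
    have := natCast_ne_zero_of_lt p (2*m+3) (by omega) (by omega)
    push_cast at this
    exact this
  unfold Apoly
  simp only [pow_zero, pow_one, one_mul]
  have hext : (∑ n ∈ Finset.range (m+1), C (gcoef p 1 m n) * (X*(1+X))^n)
      = ∑ n ∈ Finset.range (m+2), C (gcoef p 1 m n) * (X*(1+X))^n := by
    rw [Finset.sum_range_succ (fun n => C (gcoef p 1 m n) * (X*(1+X))^n) (m+1),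
      gcoef_vanish p 1 m (m+1) (by omega)]
    simp
  rw [hext]
  have hs : C (2*(m:ZMod p)+3) * (∑ n ∈ Finset.range (m+2), C (gcoef p 1 (m+1) n) * (X*(1+X))^n)
      = C (4*(m:ZMod p)+5) * (∑ n ∈ Finset.range (m+2), C (gcoef p 0 (m+1) n) * (X*(1+X))^n)
        - C (2*(m:ZMod p)+2) * (∑ n ∈ Finset.range (m+2), C (gcoef p 1 m n) * (X*(1+X))^n) := by
    rw [Finset.mul_sum, Finset.mul_sum, Finset.mul_sum, ← Finset.sum_sub_distrib]
    refine Finset.sum_congr rfl fun n hn => ?_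
    have hf : ((n.factorial : ℕ) : ZMod p) ≠ 0 := by
      refine factCast_ne_zero p n (by simp only [Finset.mem_range] at hn; omega)
    have sc := R1 p m n h2 hm hb hf
    rw [← mul_assoc, ← mul_assoc, ← mul_assoc, ← C_mul, ← C_mul, ← C_mul, ← sub_mul, ← C_sub, sc]
  linear_combination (1+2*X) * hs

lemma Arec1 (m : ℕ) (hp5 : 5 ≤ p) (hbd : 2*m+4 ≤ p) :
    C (2*(m:ZMod p)+2) * Apoly p 0 (m+1)
      = C (4*(m:ZMod p)+3) * ((1+2*X) * Apoly p 1 m) - C (2*(m:ZMod p)+1) * Apoly p 0 m := by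
  have h2 : (2 : ZMod p) ≠ 0 := by
    have := natCast_ne_zero_of_lt p 2 (by omega) (by omega)
    exact_mod_cast this
  unfold Apoly
  simp only [pow_zero, pow_one, one_mul]
  have hextS1 : (∑ n ∈ Finset.range (m+1), C (gcoef p 1 m n) * (X*(1+X))^n)
      = ∑ n ∈ Finset.range (m+2), C (gcoef p 1 m n) * (X*(1+X))^n := by
    rw [Finset.sum_range_succ (fun n => C (gcoef p 1 m n) * (X*(1+X))^n) (m+1),
      gcoef_vanish p 1 m (m+1) (by omega)]
    simp
  have hextS0 : (∑ n ∈ Finset.range (m+1), C (gcoef p 0 m n) * (X*(1+X))^n)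
      = ∑ n ∈ Finset.range (m+2), C (gcoef p 0 m n) * (X*(1+X))^n := by
    rw [Finset.sum_range_succ (fun n => C (gcoef p 0 m n) * (X*(1+X))^n) (m+1),
      gcoef_vanish p 0 m (m+1) (by omega)]
    simp
  have hshift : (X*(1+X)) * (∑ n ∈ Finset.range (m+1), C (gcoef p 1 m n) * (X*(1+X))^n)
      = ∑ n ∈ Finset.range (m+2),
          (if n = 0 then 0 else C (gcoef p 1 m (n-1)) * (X*(1+X))^n) := by
    rw [Finset.sum_range_succ' (fun n => if n = 0 then 0
        else C (gcoef p 1 m (n-1)) * (X*(1+X))^n) (m+1)]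
    simp only [Nat.succ_ne_zero, if_false, Nat.add_sub_cancel, if_pos, add_zero]
    rw [Finset.mul_sum]
    refine Finset.sum_congr rfl fun n hn => ?_
    ring
  have expand : (1+2*X) * ((1+2*X) * (∑ n ∈ Finset.range (m+1), C (gcoef p 1 m n) * (X*(1+X))^n))
      = (∑ n ∈ Finset.range (m+2), C (gcoef p 1 m n) * (X*(1+X))^n)
        + 4 * ∑ n ∈ Finset.range (m+2),
            (if n = 0 then 0 else C (gcoef p 1 m (n-1)) * (X*(1+X))^n) := by
    rw [← hshift, ← hextS1]
    ring
  rw [expand, hextS0]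
  rw [Finset.mul_sum]
  rw [show C (4*(m:ZMod p)+3) * ((∑ n ∈ Finset.range (m+2), C (gcoef p 1 m n) * (X*(1+X))^n)
        + 4 * ∑ n ∈ Finset.range (m+2),
            (if n = 0 then 0 else C (gcoef p 1 m (n-1)) * (X*(1+X))^n))
      - C (2*(m:ZMod p)+1) * (∑ n ∈ Finset.range (m+2), C (gcoef p 0 m n) * (X*(1+X))^n)
    = ∑ n ∈ Finset.range (m+2),
        (C (4*(m:ZMod p)+3) * ((C (gcoef p 1 m n) * (X*(1+X))^n)
            + 4 * (if n = 0 then 0 else C (gcoef p 1 m (n-1)) * (X*(1+X))^n))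
          - C (2*(m:ZMod p)+1) * (C (gcoef p 0 m n) * (X*(1+X))^n))
    from by
      rw [Finset.sum_sub_distrib]
      congr 1
      · rw [← Finset.mul_sum]
        congr 1
        rw [Finset.sum_add_distrib, ← Finset.mul_sum]
      · rw [← Finset.mul_sum]]
  refine Finset.sum_congr rfl fun n hn => ?_
  match n with
  | 0 =>
    simp only [if_pos, pow_zero, mul_one, mul_zero, add_zero, gcoef_zero]
    rw [show (2*(m:ZMod p)+2) = (4*(m:ZMod p)+3) - (2*(m:ZMod p)+1) by ring, C_sub]
    ring
  | t+1 =>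
    have hn1 : ((t : ZMod p) + 1) ≠ 0 := by
      have := natCast_ne_zero_of_lt p (t+1) (by simp only [Finset.mem_range] at hn; omega)
        (by simp only [Finset.mem_range] at hn; omega)
      push_cast at this
      exact this
    have hf : ((t.factorial : ℕ) : ZMod p) ≠ 0 := by
      refine factCast_ne_zero p t (by simp only [Finset.mem_range] at hn; omega)
    have sc := R2 p m t h2 hn1 hf
    simp only [Nat.succ_ne_zero, if_false, Nat.add_sub_cancel]
    rw [← mul_assoc (C (2*(m:ZMod p)+2)), ← C_mul,
      ← mul_assoc (C (2*(m:ZMod p)+1)), ← C_mul]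
    calc C ((2*(m:ZMod p)+2) * gcoef p 0 (m+1) (t+1)) * (X*(1+X))^(t+1)
        = C ((4*(m:ZMod p)+3) * (gcoef p 1 m (t+1) + 4 * gcoef p 1 m t)
            - (2*(m:ZMod p)+1) * gcoef p 0 m (t+1)) * (X*(1+X))^(t+1) := by rw [sc]
      _ = _ := by
          simp only [map_sub, map_mul, map_add, map_ofNat]
          ring

lemma AeqB (m : ℕ) (hp5 : 5 ≤ p) (h : 4*m+2 ≤ p) :
    Apoly p 0 m = Bpoly p (2*m) ∧ Apoly p 1 m = Bpoly p (2*m+1) := by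
  induction m with
  | zero =>
    constructor
    · show Apoly p 0 0 = Bpoly p 0
      simp [Apoly, Bpoly, gcoef_zero, bcoef_zero]
    · show Apoly p 1 0 = Bpoly p 1
      have hb1 : bcoef p 1 1 = 2 := by
        simp [bcoef]
        norm_num
      rw [Apoly, Bpoly]
      rw [Finset.sum_range_succ, Finset.sum_range_succ, Finset.sum_range_zero,
        Finset.sum_range_succ, Finset.sum_range_zero, gcoef_zero, bcoef_zero, hb1]
      simp only [map_ofNat, map_one, pow_zero, pow_one, mul_one, one_mul, zero_add]
  | succ m ih =>
    have h' : 4*m+2 ≤ p := by omega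
    obtain ⟨h0, h1⟩ := ih h'
    have c1 : Apoly p 0 (m+1) = Bpoly p (2*m+2) := by
      have hA := Arec1 p m hp5 (by omega)
      have hB := Brec p (2*m) hp5 (by omega)
      rw [h0, h1] at hA
      have e : (((2*m:ℕ)) : ZMod p) = 2*(m:ZMod p) := by push_cast; ring
      rw [e, show (2*(2*(m:ZMod p))+3) = 4*(m:ZMod p)+3 by ring,
        show 2*m+1+1 = 2*m+2 by omega] at hB
      have heq : C (2*(m:ZMod p)+2) * Apoly p 0 (m+1)
          = C (2*(m:ZMod p)+2) * Bpoly p (2*m+2) := by rw [hA, ← hB]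
      have hC : (C (2*(m:ZMod p)+2) : (ZMod p)[X]) ≠ 0 := by
        rw [Ne, Polynomial.C_eq_zero]
        have := natCast_ne_zero_of_lt p (2*m+2) (by omega) (by omega)
        push_cast at this
        exact this
      exact mul_left_cancel₀ hC heq
    have c2 : Apoly p 1 (m+1) = Bpoly p (2*m+3) := by
      have hA := Arec0 p m hp5 (by omega)
      have hB := Brec p (2*m+1) hp5 (by omega)
      rw [c1, h1] at hA
      have e : (((2*m+1:ℕ)) : ZMod p) = 2*(m:ZMod p)+1 := by push_cast; ring
      rw [e, show (2*(m:ZMod p)+1+2) = 2*(m:ZMod p)+3 by ring,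
        show (2*(2*(m:ZMod p)+1)+3) = 4*(m:ZMod p)+5 by ring,
        show (2*(m:ZMod p)+1+1) = 2*(m:ZMod p)+2 by ring,
        show 2*m+1+2 = 2*m+3 by omega, show 2*m+1+1 = 2*m+2 by omega] at hB
      have heq : C (2*(m:ZMod p)+3) * Apoly p 1 (m+1)
          = C (2*(m:ZMod p)+3) * Bpoly p (2*m+3) := by rw [hA, ← hB]
      have hC : (C (2*(m:ZMod p)+3) : (ZMod p)[X]) ≠ 0 := by
        rw [Ne, Polynomial.C_eq_zero]
        have := natCast_ne_zero_of_lt p (2*m+3) (by omega) (by omega)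
        push_cast at this
        exact this
      exact mul_left_cancel₀ hC heq
    refine ⟨by rw [show 2*(m+1) = 2*m+2 by omega]; exact c1,
      by rw [show 2*(m+1)+1 = 2*m+3 by omega]; exact c2⟩


lemma eps_nu_mod8 (hp5 : 5 ≤ p) : eps p ≤ 1 ∧ nu p ≤ 1 ∧ p % 8 = 1 + 2 * eps p + 4 * nu p := by
  have hp : p.Prime := Fact.out
  have hp2 : p ≠ 2 := by omega
  have hodd : p % 2 = 1 := Nat.odd_iff.mp (hp.odd_of_ne_two hp2)
  have h8 : p % 8 % 2 = 1 := by omega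
  have he : eps p = if p % 4 = 1 then 0 else 1 := by
    rw [eps, legendreSym.at_neg_one hp2, ZMod.χ₄_nat_eq_if_mod_four, if_neg (by omega)]
    by_cases h4 : p % 4 = 1
    · simp [h4]
    · simp [h4]
  have hn : nu p = if p % 8 = 1 ∨ p % 8 = 3 then 0 else 1 := by
    rw [nu, legendreSym.at_neg_two hp2, ZMod.χ₈'_nat_eq_if_mod_eight, if_neg (by omega)]
    by_cases h8' : p % 8 = 1 ∨ p % 8 = 3
    · simp [h8']
    · simp [h8']
  have hcase : p % 8 = 1 ∨ p % 8 = 3 ∨ p % 8 = 5 ∨ p % 8 = 7 := by omega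
  have h48 : p % 4 = p % 8 % 4 := by omega
  rcases hcase with h | h | h | h <;>
    simp only [he, hn, h48, h] <;> norm_num

lemma p_div4_eq (hp5 : 5 ≤ p) : p / 4 = 2 * (p / 8) + nu p := by
  obtain ⟨h1, h2, h3⟩ := eps_nu_mod8 p hp5
  omega

lemma two_ne (hp5 : 5 ≤ p) : (2 : ZMod p) ≠ 0 := by
  exact_mod_cast natCast_ne_zero_of_lt p 2 (by omega) (by omega)

lemma four_ne (hp5 : 5 ≤ p) : (4 : ZMod p) ≠ 0 := by
  rw [show (4 : ZMod p) = 2*2 by norm_num]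
  exact mul_ne_zero (two_ne p hp5) (two_ne p hp5)

lemma eight_ne (hp5 : 5 ≤ p) : (8 : ZMod p) ≠ 0 := by
  rw [show (8 : ZMod p) = 2*4 by norm_num]
  exact mul_ne_zero (two_ne p hp5) (four_ne p hp5)

lemma hbeta (hp5 : 5 ≤ p) :
    (3 : ZMod p) / 8 - ((((eps p : ℤ) - 2 * (nu p : ℤ)) : ℤ) : ZMod p) / 4
      = ((p / 8 : ℕ) : ZMod p) + ((nu p : ℕ) : ZMod p) + 2⁻¹ := by
  obtain ⟨-, -, hmod⟩ := eps_nu_mod8 p hp5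
  have hkey : ((8*(p/8) + 1 + 2*eps p + 4*nu p : ℕ) : ZMod p) = 0 := by
    rw [show 8*(p/8) + 1 + 2*eps p + 4*nu p = p by omega]
    exact ZMod.natCast_self p
  push_cast at hkey
  have h2c : (2:ZMod p)*2⁻¹ = 1 := mul_inv_cancel₀ (two_ne p hp5)
  have h4c : (4:ZMod p)*4⁻¹ = 1 := mul_inv_cancel₀ (four_ne p hp5)
  have h8c : (8:ZMod p)*8⁻¹ = 1 := mul_inv_cancel₀ (eight_ne p hp5)
  push_cast
  apply mul_left_cancel₀ (eight_ne p hp5)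
  rw [div_eq_mul_inv, div_eq_mul_inv]
  linear_combination (3:ZMod p)*h8c - (2*((eps p : ZMod p) - 2*(nu p : ZMod p)))*h4c
    - 4*h2c - hkey

lemma halpha (hp5 : 5 ≤ p) :
    (3 : ZMod p) / 4 - ((eps p : ℕ) : ZMod p) / 2 = ((p / 4 : ℕ) : ZMod p) + 1 := by
  obtain ⟨he1, hn1, hmod⟩ := eps_nu_mod8 p hp5
  have hkey : ((4*(p/4) + 1 + 2*eps p : ℕ) : ZMod p) = 0 := by
    rw [show 4*(p/4) + 1 + 2*eps p = p by omega]
    exact ZMod.natCast_self p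
  push_cast at hkey
  have h2c : (2:ZMod p)*2⁻¹ = 1 := mul_inv_cancel₀ (two_ne p hp5)
  have h4c : (4:ZMod p)*4⁻¹ = 1 := mul_inv_cancel₀ (four_ne p hp5)
  apply mul_left_cancel₀ (four_ne p hp5)
  rw [div_eq_mul_inv, div_eq_mul_inv]
  linear_combination (3:ZMod p)*h4c - (2*(eps p : ZMod p))*h2c - hkey


theorem ss2star_ss2_algebraic_relation' (hp : 5 ≤ p) :
    ∑ k ∈ Finset.range ((p / 8 + eps p + nu p) + 1),
        C ((ss2Star p).coeff k) * X ^ (2 * k) * (X - C 64) ^ ((p / 8 + eps p + nu p) - k) =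
      X ^ eps p * (X - C 128) ^ nu p * ss2Poly p := by
  obtain ⟨he1, hn1, hmod⟩ := eps_nu_mod8 p hp
  have hquarter : p/4 = 2*(p/8) + nu p := p_div4_eq p hp
  -- coefficient form of ss2Star
  have hss2star : ss2Star p = (X - C 256)^(nu p) *
      ∑ n ∈ Finset.range (p/8+1),
        C (gcoef p (nu p) (p/8) n * (-64)^n) * X^(p/8 + eps p - n) := by
    unfold ss2Star
    congr 1
    refine Finset.sum_congr rfl fun n hn => ?_
    congr 1
    rw [hbeta p hp]
    unfold poch gcoef
    rw [show ((256 : ZMod p))^n = (-4 : ZMod p)^n * (-64)^n by rw [← mul_pow]; norm_num]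
    ring
  -- coefficient form of ss2Poly
  have hss2 : ss2Poly p = ∑ s ∈ Finset.range (p/4+1),
      C (bcoef p (p/4) s * (-64)^s) * X^(p/4 + eps p - s) := by
    unfold ss2Poly
    refine Finset.sum_congr rfl fun s hs => ?_
    congr 1
    rw [halpha p hp]
    unfold poch bcoef
    rw [show ((64 : ZMod p))^s = (-1 : ZMod p)^s * (-64)^s by rw [← mul_pow]; norm_num]
    ring
  -- degree bound
  have hdeg : (ss2Star p).natDegree ≤ p/8 + eps p + nu p := by
    rw [hss2star]
    refine le_trans (natDegree_mul_le) ?_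
    have h1 : ((X - C (256 : ZMod p))^(nu p)).natDegree ≤ nu p := by
      refine le_trans (natDegree_pow_le) ?_
      rw [natDegree_X_sub_C]
      omega
    have h2 : ((∑ n ∈ Finset.range (p/8+1),
        C (gcoef p (nu p) (p/8) n * (-64)^n) * X^(p/8 + eps p - n))).natDegree
        ≤ p/8 + eps p := by
      refine Polynomial.natDegree_sum_le_of_forall_le _ _ fun n hn => ?_
      refine le_trans (natDegree_mul_le) ?_
      rw [natDegree_C, natDegree_X_pow]
      omega
    omega
  -- pass to RatFunc
  apply RatFunc.algebraMap_injective (ZMod p)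
  set R := RatFunc (ZMod p) with hR
  set φ := algebraMap (ZMod p)[X] R with hphi
  set ψ := algebraMap (ZMod p) R with hpsi
  have hCpsi : ∀ a : ZMod p, φ (C a) = ψ a := fun a => RatFunc.algebraMap_C a
  set x := φ X with hxdef
  have hx : x ≠ 0 := RatFunc.algebraMap_ne_zero Polynomial.X_ne_zero
  have hw : φ (X - C 64) = x - 64 := by
    rw [map_sub, hCpsi, map_ofNat]
  have hwne : x - (64 : R) ≠ 0 := by
    rw [← hw]
    exact RatFunc.algebraMap_ne_zero (Polynomial.X_sub_C_ne_zero 64)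
  set t : R := x^2 / (x - 64) with htdef
  set y : R := -64 / x with hydef
  have hkey : (1 + 2*y)*x = x - 128 := by
    rw [hydef]
    dsimp only [R] at hx ⊢
    field_simp
    ring
  have hty : t * (x - 64) = x^2 := by
    rw [htdef]
    dsimp only [R] at hwne ⊢
    field_simp
  have hyy : (y*(1+y))*x^2 = -64*(x-64) := by
    rw [hydef]
    dsimp only [R] at hx ⊢
    field_simp
    ring
  -- LHS as aeval
  have hLHS : φ (∑ k ∈ Finset.range ((p / 8 + eps p + nu p) + 1),
        C ((ss2Star p).coeff k) * X ^ (2 * k) * (X - C 64) ^ ((p / 8 + eps p + nu p) - k))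
      = (Polynomial.aeval t (ss2Star p)) * (x - 64) ^ (p / 8 + eps p + nu p) := by
    rw [map_sum, aeval_eq_sum_range' (Nat.lt_succ_of_le hdeg), Finset.sum_mul]
    refine Finset.sum_congr rfl fun k hk => ?_
    simp only [Finset.mem_range] at hk
    have hk' : k ≤ p / 8 + eps p + nu p := by omega
    rw [map_mul, map_mul, map_pow, map_pow, hCpsi, hw, Algebra.smul_def, ← hpsi]
    rw [← pow_mul_pow_sub (x - (64:R)) hk']
    rw [htdef]
    rw [div_pow]
    rw [← pow_mul]
    dsimp only [R] at hx hwne ⊢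
    field_simp
    ring
  have hyx : y * x = -64 := by
    rw [hydef]
    dsimp only [R] at hx ⊢
    field_simp
  -- A-side sum manipulation
  have hAside : (∑ n ∈ Finset.range (p/8+1),
        ψ (gcoef p (nu p) (p/8) n * (-64)^n) * t^(p/8 + eps p - n)) * (x-64)^(p/8 + eps p)
      = x^(2*eps p) * x^(2*(p/8)) *
          ∑ n ∈ Finset.range (p/8+1), ψ (gcoef p (nu p) (p/8) n) * (y*(1+y))^n := by
    rw [Finset.sum_mul, Finset.mul_sum]
    refine Finset.sum_congr rfl fun n hn => ?_
    simp only [Finset.mem_range] at hn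
    obtain ⟨j, hj⟩ : ∃ j, p/8 = n + j := ⟨p/8 - n, by omega⟩
    rw [show p/8 + eps p - n = j + eps p by omega, hj, map_mul, map_pow, map_neg, map_ofNat]
    have e1 : t^(j + eps p) * (x-64)^(j + eps p) = (x^2)^(j + eps p) := by
      rw [← mul_pow, hty]
    have e2 : (y*(1+y))^n * (x^2)^n = (-64*(x-64))^n := by
      rw [← mul_pow, hyy]
    have e4 : (-64:R)^n * (x-64)^n = (-64*(x-64))^n := by rw [mul_pow]
    linear_combination (ψ (gcoef p (nu p) (n+j) n) * (-64:R)^n * (x-64)^n) * e1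
      + (-(x^(2*eps p) * x^(2*j) * ψ (gcoef p (nu p) (n+j) n))) * e2
      + (x^(2*eps p) * x^(2*j) * ψ (gcoef p (nu p) (n+j) n)) * e4
  -- B-side sum manipulation
  have hBside : (∑ s ∈ Finset.range (p/4+1),
        ψ (bcoef p (p/4) s * (-64)^s) * x^(p/4 + eps p - s))
      = x^(eps p) * x^(p/4) *
          ∑ s ∈ Finset.range (p/4+1), ψ (bcoef p (p/4) s) * y^s := by
    rw [Finset.mul_sum]
    refine Finset.sum_congr rfl fun s hs => ?_
    simp only [Finset.mem_range] at hs
    obtain ⟨j, hj⟩ : ∃ j, p/4 = s + j := ⟨p/4 - s, by omega⟩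
    rw [show p/4 + eps p - s = j + eps p by omega, hj, map_mul, map_pow, map_neg, map_ofNat]
    have e3 : y^s * x^s = (-64:R)^s := by rw [← mul_pow, hyx]
    linear_combination (-(x^(j + eps p) * ψ (bcoef p (s+j) s))) * e3
  -- aeval of Apoly and Bpoly at y
  have haevalA : Polynomial.aeval y (Apoly p (nu p) (p/8))
      = (1+2*y)^(nu p) * ∑ n ∈ Finset.range (p/8+1),
          ψ (gcoef p (nu p) (p/8) n) * (y*(1+y))^n := by
    unfold Apoly
    simp only [map_mul, map_pow, map_add, map_sum, map_one, map_ofNat, aeval_X, aeval_C]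
    rfl
  have haevalB : Polynomial.aeval y (Bpoly p (p/4))
      = ∑ s ∈ Finset.range (p/4+1), ψ (bcoef p (p/4) s) * y^s := by
    unfold Bpoly
    simp only [map_sum, map_mul, map_pow, aeval_C, aeval_X]
    rfl
  -- the Legendre identity
  have hAB : Apoly p (nu p) (p/8) = Bpoly p (p/4) := by
    rcases Nat.le_one_iff_eq_zero_or_eq_one.mp hn1 with h | h
    · rw [h, show p/4 = 2*(p/8) by omega]
      exact (AeqB p (p/8) hp (by omega)).1
    · rw [h, show p/4 = 2*(p/8)+1 by omega]
      exact (AeqB p (p/8) hp (by omega)).2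
  -- base identity for the nu-power
  have ht256 : (t - 256) * (x - 64) = (x-128)^2 := by
    rw [htdef]
    dsimp only [R] at hwne ⊢
    field_simp
    ring
  have hpw : ((x-128)^2)^(nu p) * (x^2)^(eps p) * x^(2*(p/8))
      = (x^(eps p))^2 * (x-128)^(nu p) * x^(p/4) * (1+2*y)^(nu p) := by
    rw [hquarter, ← hkey]
    rw [show (((1+2*y)*x)^2)^(nu p) = ((1+2*y)^2)^(nu p) * (x^2)^(nu p) by
      rw [← mul_pow, ← mul_pow]]
    rw [show x^(2*(p/8) + nu p) = x^(2*(p/8)) * x^(nu p) from pow_add x _ _]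
    rw [show ((1+2*y)^2)^(nu p) = (1+2*y)^(nu p) * (1+2*y)^(nu p) by
      rw [← pow_add, ← pow_mul]; ring_nf]
    rw [show ((1+2*y)*x)^(nu p) = (1+2*y)^(nu p) * x^(nu p) from mul_pow _ _ _]
    rw [show (x^2)^(nu p) = x^(nu p) * x^(nu p) by rw [← pow_add, ← pow_mul]; ring_nf]
    dsimp only [R]
    ring
  -- mapped RHS
  have hmapsum : φ (ss2Poly p) = ∑ s ∈ Finset.range (p/4+1),
      ψ (bcoef p (p/4) s * (-64)^s) * x^(p/4 + eps p - s) := by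
    rw [hss2, map_sum]
    refine Finset.sum_congr rfl fun s hs => ?_
    rw [map_mul, map_pow, hCpsi, ← hxdef]
  have hmapstar : Polynomial.aeval t (ss2Star p)
      = (t - 256)^(nu p) * ∑ n ∈ Finset.range (p/8+1),
          ψ (gcoef p (nu p) (p/8) n * (-64)^n) * t^(p/8 + eps p - n) := by
    rw [hss2star, map_mul, map_pow, map_sub, aeval_X, aeval_C, map_ofNat, map_sum]
    congr 1
    refine Finset.sum_congr rfl fun n hn => ?_
    rw [map_mul, map_pow, aeval_C, aeval_X, ← hpsi]
  have hmapRHS : φ (X ^ eps p * (X - C 128) ^ nu p * ss2Poly p)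
      = x^(eps p) * (x-128)^(nu p) * ∑ s ∈ Finset.range (p/4+1),
          ψ (bcoef p (p/4) s * (-64)^s) * x^(p/4 + eps p - s) := by
    rw [map_mul, map_mul, map_pow, map_pow, map_sub, hCpsi, map_ofNat, hmapsum, ← hxdef]
  have h256nu : (t-256)^(nu p) * (x-64)^(nu p) = ((x-128)^2)^(nu p) := by
    rw [← mul_pow, ht256]
  rw [hLHS, hmapRHS, hmapstar, hBside, ← haevalB, ← hAB, haevalA,
    pow_add (x - (64:R)) (p/8 + eps p) (nu p)]
  linear_combination ((t-256)^(nu p) * (x-64)^(nu p)) * hAside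
    + ((x^2)^(eps p) * x^(2*(p/8)) * ∑ n ∈ Finset.range (p/8+1),
        ψ (gcoef p (nu p) (p/8) n) * (y*(1+y))^n) * h256nu
    + (∑ n ∈ Finset.range (p/8+1), ψ (gcoef p (nu p) (p/8) n) * (y*(1+y))^n) * hpw


/-- Let p ≥ 5 be prime, m = ⌊p/8⌋, d = m + ε + ν, and a_k the coefficients of
ss_p^{(2*)}. Then Σ_{k=0}^{d} a_k X^{2k} (X − 64)^{d−k} = X^ε (X − 128)^ν ss_p^{(2)}(X)
in 𝔽_p[X]; i.e. (X−64)^{m+ε+ν} ss_p^{(2*)}(X²/(X−64)) = X^ε (X−128)^ν ss_p^{(2)}(X) mod p. -/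
theorem ss2star_ss2_algebraic_relation (hp : 5 ≤ p) :
    ∑ k ∈ Finset.range ((p / 8 + eps p + nu p) + 1),
        C ((ss2Star p).coeff k) * X ^ (2 * k) * (X - C 64) ^ ((p / 8 + eps p + nu p) - k) =
      X ^ eps p * (X - C 128) ^ nu p * ss2Poly p :=
  ss2star_ss2_algebraic_relation' p hp
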